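/- arXiv:1701.02134 — 2 statements merged into one kernel-verified Lean document; each statement's English description precedes it below -/
import Mathlib

section
/- Let U ⊆ ℂ be open and y : U → ℂ holomorphic with y′(z) ≠ 0 for all z ∈ U. Define x : U → ℝ³ by x = (2 Re y, 2 Im y, 1 − |y|²)/(1 + |y|²) (inverse stereographic projection onto the unit sphere), and write x_z := ½(x_u − i x_v), x_z̄ := ½(x_u + i x_v) ∈ ℂ³. Then, with B_ℂ the complex-bilinear extension of the Euclidean inner product, B_ℂ(x_z, x_z̄) ≠ 0 and (1/(2y′)) · (1 − y², i(1 + y²), −2y) = x_z̄ / B_ℂ(x_z, x_z̄) at every point of U; i.e. the Enneper–Weierstrass integrand is exactly the Christoffel dual differential of the Gauss map. (Paper: Section 3, equation (weierdiff) specialized to 𝔮 = dz².) -/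
/-!
Since `y` is holomorphic, the chain rule for the Wirtinger derivative gives
`x_z̄ = conj y′ · σ_w̄(y)`, where `σ` is the inverse stereographic projection, and a direct computation
gives `σ_w̄(w) = (1 − w², i(1 + w²), −2w) / (1 + |w|²)²`. So `x_z̄ = c · W` with
`W = (1 − y², i(1 + y²), −2y)` and `c = conj y′ / (1 + |y|²)²`. As `x` is real, `x_z = conj x_z̄`, so
`B_ℂ(x_z, x_z̄) = |c|² (|1 − y²|² + |1 + y²|² + 4|y|²) = 2 |c|² (1 + |y|²)² = 2 y′ c`,
and `x_z̄ / B_ℂ(x_z, x_z̄) = W / (2 y′)`.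
-/

/-- Componentwise inclusion `ℝ³ ↪ ℂ³`. -/
noncomputable def toC (x : ℝ × ℝ × ℝ) : ℂ × ℂ × ℂ := ((x.1 : ℂ), (x.2.1 : ℂ), (x.2.2 : ℂ))

/-- Partial derivatives of a map `x : ℂ → ℝ³` with respect to the real coordinates
`z = u + iv`. -/
noncomputable def pdu (x : ℂ → ℝ × ℝ × ℝ) (p : ℂ) : ℝ × ℝ × ℝ := fderiv ℝ x p 1
noncomputable def pdv (x : ℂ → ℝ × ℝ × ℝ) (p : ℂ) : ℝ × ℝ × ℝ := fderiv ℝ x p Complex.I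

/-- `x_z := ½ (x_u − i x_v)` in `ℂ³`. -/
noncomputable def pdz (x : ℂ → ℝ × ℝ × ℝ) (p : ℂ) : ℂ × ℂ × ℂ :=
  (1 / 2 : ℂ) • (toC (pdu x p) - Complex.I • toC (pdv x p))

/-- `x_z̄ := ½ (x_u + i x_v)` in `ℂ³`. -/
noncomputable def pdzbar (x : ℂ → ℝ × ℝ × ℝ) (p : ℂ) : ℂ × ℂ × ℂ :=
  (1 / 2 : ℂ) • (toC (pdu x p) + Complex.I • toC (pdv x p))

/-- The complex-bilinear extension of the Euclidean inner product of `ℝ³` to `ℂ³`. -/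
def BEc (ξ η : ℂ × ℂ × ℂ) : ℂ := ξ.1 * η.1 + ξ.2.1 * η.2.1 + ξ.2.2 * η.2.2

open Complex ComplexConjugate

def weierstrassData (w : ℂ) : ℂ × ℂ × ℂ := (1 - w ^ 2, I * (1 + w ^ 2), -2 * w)

@[simp] lemma star_toC (r : ℝ × ℝ × ℝ) : star (toC r) = toC r := by
  simp [toC, Prod.star_def]

lemma pdz_eq_star_pdzbar (x : ℂ → ℝ × ℝ × ℝ) (p : ℂ) : pdz x p = star (pdzbar x p) := by
  simp [pdz, pdzbar, star_smul, sub_eq_add_neg]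

lemma BEc_star_self (ξ : ℂ × ℂ × ℂ) :
    BEc (star ξ) ξ = (normSq ξ.1 + normSq ξ.2.1 + normSq ξ.2.2 : ℝ) := by
  simp [BEc, Prod.star_def, normSq_eq_conj_mul_self]

lemma BEc_star_smul (c : ℂ) (ξ : ℂ × ℂ × ℂ) :
    BEc (star (c • ξ)) (c • ξ) = conj c * c * BEc (star ξ) ξ := by
  simp only [BEc, Prod.star_def, Prod.smul_fst, Prod.smul_snd, smul_eq_mul, star_mul',
    Complex.star_def]
  ring

lemma BEc_star_weierstrassData (w : ℂ) :
    BEc (star (weierstrassData w)) (weierstrassData w) = 2 * (1 + normSq w) ^ 2 := by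
  have h : normSq (1 - w ^ 2) + normSq (I * (1 + w ^ 2)) + normSq (-2 * w) =
      2 * (1 + normSq w) ^ 2 := by
    simp only [pow_two, normSq_apply, sub_re, one_re, mul_re, sub_im, one_im, mul_im, zero_sub,
      neg_add_rev, I_re, add_re, zero_mul, I_im, add_im, zero_add, one_mul, neg_mul, neg_re, re_ofNat,
      im_ofNat, sub_zero, mul_neg, neg_neg, neg_im, add_zero]
    ring
  rw [BEc_star_self, weierstrassData]
  exact_mod_cast h

lemma toC_apply_add_I_smul_toC_apply_I_mul (L : ℂ →L[ℝ] ℝ × ℝ × ℝ) (h : ℂ) :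
    toC (L h) + I • toC (L (I * h)) = conj h • (toC (L 1) + I • toC (L I)) := by
  have hL : L h = h.re • L 1 + h.im • L I := by
    rw [← map_smul, ← map_smul, ← map_add]; congr 1; apply Complex.ext <;> simp
  have hLI : L (I * h) = (-h.im) • L 1 + h.re • L I := by
    rw [← map_smul, ← map_smul, ← map_add]; congr 1; apply Complex.ext <;> simp
  have hc : conj h = h.re - h.im * I := by
    apply Complex.ext <;> simp
  rw [hL, hLI, hc]
  ext <;> simp only [toC, Prod.fst_add, Prod.snd_add, Prod.smul_fst, Prod.smul_snd, smul_eq_mul,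
    ofReal_add, ofReal_mul, ofReal_neg] <;> ring_nf <;> rw [I_sq] <;> ring

lemma pdzbar_comp {σ : ℂ → ℝ × ℝ × ℝ} {y : ℂ → ℂ} {p : ℂ} (hσ : DifferentiableAt ℝ σ (y p))
    (hy : DifferentiableAt ℂ y p) : pdzbar (σ ∘ y) p = conj (deriv y p) • pdzbar σ (y p) := by
  have hy' := hy.hasDerivAt.hasFDerivAt.restrictScalars ℝ
  simp only [pdzbar, pdu, pdv, (hσ.hasFDerivAt.comp p hy').fderiv,
    ContinuousLinearMap.comp_apply, ContinuousLinearMap.coe_restrictScalars',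
    ContinuousLinearMap.toSpanSingleton_apply, smul_eq_mul, one_mul]
  rw [toC_apply_add_I_smul_toC_apply_I_mul, smul_comm]

noncomputable def stereoInv (w : ℂ) : ℝ × ℝ × ℝ :=
  (2 * w.re / (1 + normSq w), 2 * w.im / (1 + normSq w), (1 - normSq w) / (1 + normSq w))

lemma one_add_normSq_pos (w : ℂ) : 0 < 1 + normSq w :=
  add_pos_of_pos_of_nonneg one_pos (normSq_nonneg w)

lemma stereoInv_eq_mul_inv : stereoInv = fun z => (2 * z.re * (1 + (z.re * z.re + z.im * z.im))⁻¹,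
      2 * z.im * (1 + (z.re * z.re + z.im * z.im))⁻¹,
      (1 - (z.re * z.re + z.im * z.im)) * (1 + (z.re * z.re + z.im * z.im))⁻¹) := by
  funext z; simp [stereoInv, normSq_apply, div_eq_mul_inv]

lemma differentiableAt_stereoInv {w : ℂ} : DifferentiableAt ℝ stereoInv w := by
  have hD0 := (one_add_normSq_pos w).ne'
  rw [normSq_apply] at hD0
  rw [stereoInv_eq_mul_inv]
  fun_prop (disch := exact hD0)

lemma fderiv_stereoInv_apply (w v : ℂ) :
    fderiv ℝ stereoInv w v =
      let D := 1 + normSq w; let s := w.re * v.re + w.im * v.im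
      (2 * (D * v.re - 2 * w.re * s) / D ^ 2, 2 * (D * v.im - 2 * w.im * s) / D ^ 2,
        -4 * s / D ^ 2) := by
  have hD0 := (one_add_normSq_pos w).ne'
  rw [normSq_apply] at hD0
  have hre := reCLM.hasFDerivAt (x := w)
  have him := imCLM.hasFDerivAt (x := w)
  have hD := ((hre.mul hre).add (him.mul him)).const_add 1
  have hinv := (hasFDerivAt_inv hD0).comp w hD
  have h := ((hre.const_mul (2:ℝ)).mul hinv).prodMk
    (((him.const_mul (2:ℝ)).mul hinv).prodMk ((((hre.mul hre).add (him.mul him)).const_sub 1).mul hinv))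
  have hσ : HasFDerivAt stereoInv _ w := stereoInv_eq_mul_inv ▸ h
  rw [hσ.fderiv, normSq_apply]
  simp only [reCLM_apply, imCLM_apply, ContinuousLinearMap.comp_add,
    ContinuousLinearMap.comp_smulₛₗ, Real.ringHom_apply, smul_add, Pi.add_apply, Pi.mul_apply,
    Function.comp_apply, neg_add_rev, smul_neg, ContinuousLinearMap.prod_apply, add_apply,
    smul_apply, ContinuousLinearMap.comp_apply, ContinuousLinearMap.toSpanSingleton_apply,
    smul_eq_mul, mul_neg, neg_apply, neg_mul, Prod.mk.injEq]
  refine ⟨?_, ?_, ?_⟩ <;> field_simp <;> ring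

lemma pdzbar_stereoInv (w : ℂ) :
    pdzbar stereoInv w = (((1 + normSq w) ^ 2 : ℝ) : ℂ)⁻¹ • weierstrassData w := by
  have hD0 := (one_add_normSq_pos w).ne'
  simp only [pdzbar, pdu, pdv, fderiv_stereoInv_apply, toC, weierstrassData]
  rw [normSq_apply] at hD0 ⊢
  ext <;> apply Complex.ext <;>
    simp [pow_two, -ofReal_mul, -ofReal_add, -ofReal_sub, -ofReal_pow, -ofReal_div] <;>
    field_simp <;> ring

/-- **Section 3, (weierdiff) with 𝔮 = dz².** For the inverse stereographic projection `x` of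
a holomorphic `y` with nonvanishing derivative, the Enneper–Weierstrass integrand is exactly
the Christoffel dual differential: `(1/(2y′))(1−y², i(1+y²), −2y) = x_z̄ / B_ℂ(x_z, x_z̄)`. -/
theorem weierstrass_is_christoffel
    (U : Set ℂ) (hUopen : IsOpen U)
    (y : ℂ → ℂ) (hy : DifferentiableOn ℂ y U) (hy' : ∀ z ∈ U, deriv y z ≠ 0)
    (x : ℂ → ℝ × ℝ × ℝ)
    (hx : ∀ z, x z =
      (2 * (y z).re / (1 + Complex.normSq (y z)),
       2 * (y z).im / (1 + Complex.normSq (y z)),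
       (1 - Complex.normSq (y z)) / (1 + Complex.normSq (y z)))) :
    ∀ p ∈ U,
      BEc (pdz x p) (pdzbar x p) ≠ 0 ∧
      (2 * deriv y p)⁻¹ •
          ((1 - y p ^ 2, Complex.I * (1 + y p ^ 2), -2 * y p) : ℂ × ℂ × ℂ) =
        (BEc (pdz x p) (pdzbar x p))⁻¹ • pdzbar x p := by
  intro p hp
  obtain rfl : x = stereoInv ∘ y := funext hx
  have hyp : DifferentiableAt ℂ y p := hy.differentiableAt (hUopen.mem_nhds hp)
  set D : ℂ := (((1 + normSq (y p)) ^ 2 : ℝ) : ℂ)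
  have hD : D ≠ 0 := ofReal_ne_zero.2 (pow_pos (one_add_normSq_pos _) 2).ne'
  have hy'p : deriv y p ≠ 0 := hy' p hp
  set c := conj (deriv y p) * D⁻¹
  have hξ : pdzbar (stereoInv ∘ y) p = c • weierstrassData (y p) := by
    rw [pdzbar_comp differentiableAt_stereoInv hyp, pdzbar_stereoInv, smul_smul]
  have hB : BEc (pdz (stereoInv ∘ y) p) (pdzbar (stereoInv ∘ y) p) = 2 * deriv y p * c := by
    rw [pdz_eq_star_pdzbar, hξ, BEc_star_smul, BEc_star_weierstrassData]
    simp only [c, D, map_mul, map_inv₀, conj_ofReal, conj_conj]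
    push_cast
    field_simp
  have hc : c ≠ 0 := mul_ne_zero ((map_ne_zero _).2 hy'p) (inv_ne_zero hD)
  refine ⟨hB ▸ mul_ne_zero (mul_ne_zero two_ne_zero hy'p) hc, ?_⟩
  rw [hB, hξ, smul_smul]
  exact congrArg₂ _ (by field_simp) rfl
end

section
/- Let U ⊆ ℂ be open and y : U → ℂ holomorphic with y′(z) ≠ 0 and |y(z)| ≠ 1 for all z ∈ U. Define x : U → ℝ³ by x = (2 Re y, 2 Im y, 1 + |y|²)/(1 − |y|²) (inverse stereographic projection onto the standard 2-sheeted hyperboloid in ℝ^{2,1}), and write x_z := ½(x_u − i x_v), x_z̄ := ½(x_u + i x_v) ∈ ℂ³. Then, with B_{M,ℂ} the complex-bilinear extension of the Minkowski bilinear form B_M(x, y) = x₁y₁ + x₂y₂ − x₃y₃, one has B_{M,ℂ}(x_z, x_z̄) ≠ 0 and (1/(2y′)) · (1 + y², i(1 − y²), 2y) = x_z̄ / B_{M,ℂ}(x_z, x_z̄) at every point of U; i.e. Kobayashi's Weierstrass integrand for maximal surfaces is exactly the Christoffel dual differential of the hyperboloid Gauss map. (Paper: Section 4, following equation (kobayashi).)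 -/
/-- The complex-bilinear extension of the Minkowski bilinear form of `ℝ^{2,1}` to `ℂ³`. -/
def BMc (ξ η : ℂ × ℂ × ℂ) : ℂ := ξ.1 * η.1 + ξ.2.1 * η.2.1 - ξ.2.2 * η.2.2

/-!
Write `x = S ∘ y`, where `S = invStereo` is the inverse stereographic projection. Complexified,
`S q = (1 - q q̄)⁻¹ (q + q̄, -i (q - q̄), 1 + q q̄)`, so `∂S/∂q̄ = V(q) / (1 - |q|²)²` with
`V(q) = kobayashiVec q = (1 + q², i (1 - q²), 2q)`, and `∂S/∂q` is its conjugate because `S` is real.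
Since `y` is holomorphic, the chain rule gives `x_z̄ = conj y' · V(y) / (1 - |y|²)²` and
`x_z = y' · conj V(y) / (1 - |y|²)²`. Finally `B(conj V(q), V(q)) = 2 (1 - |q|²)²`, so
`B(x_z, x_z̄) = 2 |y'|² / (1 - |y|²)² ≠ 0` and `x_z̄ / B(x_z, x_z̄) = V(y) / (2 y')`.
-/

open Complex ComplexConjugate

noncomputable def invStereo (q : ℂ) : ℝ × ℝ × ℝ :=
  (2 * q.re / (1 - normSq q), 2 * q.im / (1 - normSq q), (1 + normSq q) / (1 - normSq q))

def kobayashiVec (q : ℂ) : ℂ × ℂ × ℂ := (1 + q ^ 2, I * (1 - q ^ 2), 2 * q)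

noncomputable def toCCLM : ℝ × ℝ × ℝ →L[ℝ] ℂ × ℂ × ℂ :=
  ofRealCLM.prodMap (ofRealCLM.prodMap ofRealCLM)

lemma toCCLM_apply (v : ℝ × ℝ × ℝ) : toCCLM v = toC v := rfl

lemma toC_invStereo (q : ℂ) :
    toC (invStereo q) = (1 - q * conj q)⁻¹ • (q + conj q, -I * (q - conj q), 1 + q * conj q) := by
  simp only [toC, invStereo, mul_conj, add_conj, sub_conj, Prod.smul_mk, smul_eq_mul]
  push_cast
  refine Prod.ext ?_ (Prod.ext ?_ ?_) <;> simp only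
  · ring
  · linear_combination (2 * q.im / (1 - normSq q) : ℂ) * I_sq
  · ring

lemma differentiableAt_invStereo {q : ℂ} (hq : normSq q ≠ 1) :
    DifferentiableAt ℝ invStereo q := by
  have : 1 - (reCLM q * reCLM q + imCLM q * imCLM q) ≠ 0 := by
    rw [reCLM_apply, imCLM_apply, ← normSq_apply]
    exact sub_ne_zero.2 (Ne.symm hq)
  unfold invStereo
  simp only [normSq_apply, ← reCLM_apply, ← imCLM_apply]
  fun_prop (disch := assumption)

lemma toC_fderiv_invStereo {q : ℂ} (hq : normSq q ≠ 1) (w : ℂ) :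
    toC (fderiv ℝ invStereo q w) =
      ((1 - normSq q : ℂ) ^ 2)⁻¹ • (conj w • kobayashiVec q + w • star (kobayashiVec q)) := by
  have hD0 : 1 - q * conj q ≠ 0 := by
    rw [mul_conj]
    exact_mod_cast sub_ne_zero.2 (Ne.symm hq)
  have hD : HasFDerivAt (fun q => 1 - q * conj q) _ q :=
    ((hasFDerivAt_id q).mul conjCLE.hasFDerivAt).const_sub 1
  have hN : HasFDerivAt (fun q => (q + conj q, -I * (q - conj q), 1 + q * conj q)) _ q :=
    ((hasFDerivAt_id q).add conjCLE.hasFDerivAt).prodMk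
      ((((hasFDerivAt_id q).sub conjCLE.hasFDerivAt).const_mul (-I)).prodMk
        (((hasFDerivAt_id q).mul conjCLE.hasFDerivAt).const_add 1))
  have hG := ((hasFDerivAt_inv' hD0).comp q hD).smul hN
  have hx : HasFDerivAt (toCCLM ∘ invStereo) (toCCLM.comp (fderiv ℝ invStereo q)) q :=
    toCCLM.hasFDerivAt.comp q (differentiableAt_invStereo hq).hasFDerivAt
  rw [show toCCLM ∘ invStereo = _ from funext toC_invStereo] at hx
  have hw := congrArg (· w) (hx.unique hG)
  simp only [ContinuousLinearMap.comp_apply, ContinuousLinearMap.prod_apply,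
    ContinuousLinearMap.smulRight_apply, ContinuousLinearMap.mulLeftRight_apply,
    ContinuousLinearMap.id_apply, ContinuousLinearEquiv.coe_coe, conjCLE_apply, add_apply,
    smul_apply, neg_apply, sub_apply, Function.comp_apply, id_eq, smul_eq_mul, Prod.smul_mk,
    Prod.mk_add_mk] at hw
  rw [← toCCLM_apply, hw, ← mul_conj]
  simp only [kobayashiVec, Prod.star_def, star_def, map_add, map_mul, map_sub, map_pow, map_one,
    map_ofNat, conj_I, Prod.smul_mk, Prod.mk_add_mk, smul_eq_mul]
  refine Prod.ext ?_ (Prod.ext ?_ ?_) <;> field_simp <;> ring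

lemma fderiv_invStereo_comp {y : ℂ → ℂ} {p : ℂ} (hy : DifferentiableAt ℂ y p)
    (hq : normSq (y p) ≠ 1) (h : ℂ) :
    fderiv ℝ (invStereo ∘ y) p h = fderiv ℝ invStereo (y p) (h * deriv y p) := by
  rw [((differentiableAt_invStereo hq).hasFDerivAt.comp p
    (hy.hasDerivAt.hasFDerivAt.restrictScalars ℝ)).fderiv]
  simp

lemma pdz_eq_of_toC_fderiv {x : ℂ → ℝ × ℝ × ℝ} {p : ℂ} {A B : ℂ × ℂ × ℂ}
    (hx : ∀ h : ℂ, toC (fderiv ℝ x p h) = h • A + conj h • B) : pdz x p = A := by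
  simp only [pdz, pdu, pdv, hx, map_one, conj_I]
  match_scalars <;> ring_nf <;> simp only [I_sq] <;> ring

lemma pdzbar_eq_of_toC_fderiv {x : ℂ → ℝ × ℝ × ℝ} {p : ℂ} {A B : ℂ × ℂ × ℂ}
    (hx : ∀ h : ℂ, toC (fderiv ℝ x p h) = h • A + conj h • B) : pdzbar x p = B := by
  simp only [pdzbar, pdu, pdv, hx, map_one, conj_I]
  match_scalars <;> ring_nf <;> simp only [I_sq] <;> ring

lemma BMc_smul_smul (a b : ℂ) (ξ η : ℂ × ℂ × ℂ) : BMc (a • ξ) (b • η) = a * b * BMc ξ η := by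
  simp only [BMc, Prod.smul_fst, Prod.smul_snd, smul_eq_mul]
  ring

lemma BMc_star_kobayashiVec (q : ℂ) :
    BMc (star (kobayashiVec q)) (kobayashiVec q) = 2 * (1 - normSq q : ℂ) ^ 2 := by
  simp only [BMc, kobayashiVec, Prod.star_def, star_def, map_add, map_mul, map_sub, map_pow,
    map_one, map_ofNat, conj_I, ← mul_conj]
  ring_nf
  simp only [I_sq]
  ring

lemma toC_fderiv_invStereo_comp {y : ℂ → ℂ} {p : ℂ} (hy : DifferentiableAt ℂ y p)
    (hq : normSq (y p) ≠ 1) (h : ℂ) :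
    toC (fderiv ℝ (invStereo ∘ y) p h) =
      h • ((deriv y p / (1 - normSq (y p) : ℂ) ^ 2) • star (kobayashiVec (y p))) +
        conj h • ((conj (deriv y p) / (1 - normSq (y p) : ℂ) ^ 2) • kobayashiVec (y p)) := by
  rw [fderiv_invStereo_comp hy hq, toC_fderiv_invStereo hq, map_mul]
  module

/-- **Section 4, following (kobayashi).** For the inverse stereographic projection `x` onto
the standard 2-sheeted hyperboloid of a holomorphic `y` with nonvanishing derivative and
`|y| ≠ 1`, Kobayashi's Weierstrass integrand is exactly the Christoffel dual differential:
`(1/(2y′))(1+y², i(1−y²), 2y) = x_z̄ / B_{M,ℂ}(x_z, x_z̄)`. -/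
theorem kobayashi_is_christoffel
    (U : Set ℂ) (hUopen : IsOpen U)
    (y : ℂ → ℂ) (hy : DifferentiableOn ℂ y U) (hy' : ∀ z ∈ U, deriv y z ≠ 0)
    (hy1 : ∀ z ∈ U, ‖y z‖ ≠ 1)
    (x : ℂ → ℝ × ℝ × ℝ)
    (hx : ∀ z, x z =
      (2 * (y z).re / (1 - Complex.normSq (y z)),
       2 * (y z).im / (1 - Complex.normSq (y z)),
       (1 + Complex.normSq (y z)) / (1 - Complex.normSq (y z)))) :
    ∀ p ∈ U,
      BMc (pdz x p) (pdzbar x p) ≠ 0 ∧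
      (2 * deriv y p)⁻¹ •
          ((1 + y p ^ 2, Complex.I * (1 - y p ^ 2), 2 * y p) : ℂ × ℂ × ℂ) =
        (BMc (pdz x p) (pdzbar x p))⁻¹ • pdzbar x p := by
  intro p hp
  have hq : normSq (y p) ≠ 1 := by
    rw [normSq_eq_norm_sq]
    exact (pow_eq_one_iff_of_nonneg (norm_nonneg _) two_ne_zero).not.2 (hy1 p hp)
  have hD : (1 - normSq (y p) : ℂ) ≠ 0 := by exact_mod_cast sub_ne_zero.2 (Ne.symm hq)
  have hc : deriv y p ≠ 0 := hy' p hp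
  have hsplit := toC_fderiv_invStereo_comp (hy.differentiableAt (hUopen.mem_nhds hp)) hq
  rw [show x = invStereo ∘ y from funext hx, pdz_eq_of_toC_fderiv hsplit,
    pdzbar_eq_of_toC_fderiv hsplit, BMc_smul_smul, BMc_star_kobayashiVec, smul_smul]
  refine ⟨by simp [hc, hD], ?_⟩
  have hc' : conj (deriv y p) ≠ 0 := (map_ne_zero _).2 hc
  congr 1
  field_simp
end
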